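/- arXiv:0912.2252 — 3 statements merged into one kernel-verified Lean document; each statement's English description precedes it below -/
import Mathlib

section
/- Let K be a commutative star ring, W a K-module, B : W × W → K a sesquilinear form (conjugate-linear in the first argument, linear in the second), V₀ ⊆ W a submodule, and P : W → W a K-linear map that is formally self-adjoint with respect to B, i.e. B(Pξ, η) = B(ξ, Pη) for all ξ, η ∈ W. Let Δ₊, Δ₋ : V₀ → W be K-linear maps satisfying P(Δ₊φ) = φ and P(Δ₋φ) = φ for all φ ∈ V₀. Then for all ψ, φ ∈ V₀ one has B(ψ, Δ₊φ) = B(Δ₋ψ, φ) and B(ψ, Δ₋φ) = B(Δ₊ψ, φ). -/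
/-- If `P` is formally self-adjoint with respect to the sesquilinear form `B`
(conjugate-linear in the first argument, linear in the second) and `Δ₊, Δ₋ : V₀ → W` are
`K`-linear maps with `P ∘ Δ± = id` on `V₀`, then `B(ψ, Δ₊φ) = B(Δ₋ψ, φ)` and
`B(ψ, Δ₋φ) = B(Δ₊ψ, φ)` for all `ψ, φ ∈ V₀`. -/
theorem green_adjoint_relation {K W : Type*} [CommRing K] [StarRing K]
    [AddCommGroup W] [Module K W]
    (B : W →ₛₗ[starRingEnd K] W →ₗ[K] K) (V₀ : Submodule K W)
    (P : W →ₗ[K] W) (hP : ∀ ξ η : W, B (P ξ) η = B ξ (P η))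
    (Δp Δm : V₀ →ₗ[K] W)
    (hΔp : ∀ φ : V₀, P (Δp φ) = (φ : W))
    (hΔm : ∀ φ : V₀, P (Δm φ) = (φ : W)) :
    ∀ ψ φ : V₀,
      B (ψ : W) (Δp φ) = B (Δm ψ) (φ : W) ∧
      B (ψ : W) (Δm φ) = B (Δp ψ) (φ : W) := by
  intro ψ φ
  constructor
  · rw [← hΔm ψ, hP, hΔp]
  · rw [← hΔp ψ, hP, hΔm]
end

section
/- Let K be a commutative star ring, W a K-star-module (with additive, involutive, star-semilinear conjugation ξ ↦ ξ*), V₀ ⊆ W a star-closed submodule, P : W → W a K-linear map with P[V₀] ⊆ V₀, and Δ₊, Δ₋ : V₀ → W K-linear maps satisfying P(Δ±φ) = φ and Δ±(Pφ) = φ for all φ ∈ V₀. Assume the exactness property: for φ ∈ V₀, (Δ₊ − Δ₋)φ = 0 implies φ ∈ P[V₀]. Define H := {φ ∈ V₀ : (Δ₊φ)* = Δ₊φ and (Δ₋φ)* = Δ₋φ} and V₀ʳ := {χ ∈ V₀ : χ* = χ}. Then the kernel of Δ := Δ₊ − Δ₋ restricted to H equals P[V₀ʳ]: an element φ ∈ H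 satisfies Δφ = 0 if and only if φ = Pχ for some χ ∈ V₀ with χ* = χ. -/
/-- Kernel of the fundamental solution restricted to the "real" subspace `H`:
for `φ ∈ V₀` with `(Δ₊φ)* = Δ₊φ` and `(Δ₋φ)* = Δ₋φ`, one has `(Δ₊ − Δ₋)φ = 0` if and only
if `φ = Pχ` for some `χ ∈ V₀` with `χ* = χ`. -/
theorem kernel_on_H {K W : Type*} [CommRing K] [StarRing K]
    [AddCommGroup W] [Module K W] [StarAddMonoid W] [StarModule K W]
    (V₀ : Submodule K W) (hV₀star : ∀ ξ ∈ V₀, star ξ ∈ V₀)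
    (P : W →ₗ[K] W) (hPV : ∀ φ : V₀, P (φ : W) ∈ V₀)
    (Δp Δm : V₀ →ₗ[K] W)
    (hΔp : ∀ φ : V₀, P (Δp φ) = (φ : W))
    (hΔm : ∀ φ : V₀, P (Δm φ) = (φ : W))
    (hpΔ : ∀ φ : V₀, Δp ⟨P (φ : W), hPV φ⟩ = (φ : W))
    (hmΔ : ∀ φ : V₀, Δm ⟨P (φ : W), hPV φ⟩ = (φ : W))
    (hexact : ∀ φ : V₀, Δp φ - Δm φ = 0 → ∃ χ : V₀, P (χ : W) = (φ : W)) :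
    ∀ φ : V₀, (star (Δp φ) = Δp φ ∧ star (Δm φ) = Δm φ) →
      (Δp φ - Δm φ = 0 ↔
        ∃ χ : V₀, star (χ : W) = (χ : W) ∧ P (χ : W) = (φ : W)) := by
  intro φ ⟨h1, _⟩
  constructor
  · intro h0
    obtain ⟨χ, hχ⟩ := hexact φ h0
    have hφeq : (⟨P (χ : W), hPV χ⟩ : V₀) = φ := Subtype.ext hχ
    have hval : (χ : W) = Δp φ := by
      rw [← hφeq]; exact (hpΔ χ).symm
    exact ⟨χ, by rw [hval, h1], hχ⟩
  · rintro ⟨χ, -, hχ⟩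
    have hφeq : (⟨P (χ : W), hPV χ⟩ : V₀) = φ := Subtype.ext hχ
    have hp := hpΔ χ
    have hm := hmΔ χ
    rw [hφeq] at hp hm
    rw [hp, hm, sub_self]
end

section
/- Let K be a commutative star ring in which 2 is invertible, W a K-star-module (with additive, involutive, star-semilinear conjugation ξ ↦ ξ*), V₀ ⊆ W a star-closed submodule, P : W → W a K-linear map with P[V₀] ⊆ V₀, and Δ₊, Δ₋ : V₀ → W K-linear maps satisfying P(Δ±φ) = φ and Δ±(Pφ) = φ for all φ ∈ V₀. Let φ ∈ V₀ be such that ψ := (Δ₊ − Δ₋)φ is real, i.e. ψ* = ψ, and suppose that δ := ((Δ₊φ)* − Δ₊φ)/2 lies in V₀. Then: (i) δ* = −δ; (ii) ((Δ₋φ)* − Δ₋φ)/2 = δ as well; (iii) the element φ' := φ + Pδ belongs to H := {η ∈ V₀ : (Δ₊η)* = Δ₊η and (Δ₋η)* = Δ₋η}; and (iv) (Δ₊ − Δ₋)φ' = ψ. Hence every real element ψ in the image of Δ₊ − Δ₋ under the stated support hypothesis has a preimage in H. -/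
/-- Every real element in the image of the fundamental solution `Δ₊ − Δ₋` has a preimage in
`H = {η ∈ V₀ : (Δ₊η)* = Δ₊η, (Δ₋η)* = Δ₋η}`: if `ψ := (Δ₊ − Δ₋)φ` is real and
`δ := ((Δ₊φ)* − Δ₊φ)/2` lies in `V₀`, then (i) `δ* = −δ`; (ii) `((Δ₋φ)* − Δ₋φ)/2 = δ`;
(iii) `φ' := φ + Pδ` belongs to `H`; and (iv) `(Δ₊ − Δ₋)φ' = ψ`. -/
theorem real_solution_has_H_preimage {K W : Type*} [CommRing K] [StarRing K]
    [Invertible (2 : K)]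
    [AddCommGroup W] [Module K W] [StarAddMonoid W] [StarModule K W]
    (V₀ : Submodule K W) (hV₀star : ∀ ξ ∈ V₀, star ξ ∈ V₀)
    (P : W →ₗ[K] W) (hPV : ∀ φ : V₀, P (φ : W) ∈ V₀)
    (Δp Δm : V₀ →ₗ[K] W)
    (hΔp : ∀ φ : V₀, P (Δp φ) = (φ : W))
    (hΔm : ∀ φ : V₀, P (Δm φ) = (φ : W))
    (hpΔ : ∀ φ : V₀, Δp ⟨P (φ : W), hPV φ⟩ = (φ : W))
    (hmΔ : ∀ φ : V₀, Δm ⟨P (φ : W), hPV φ⟩ = (φ : W))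
    (φ : V₀) (hψreal : star (Δp φ - Δm φ) = Δp φ - Δm φ)
    (δ : W) (hδdef : δ = (⅟(2 : K)) • (star (Δp φ) - Δp φ)) (hδ : δ ∈ V₀) :
    star δ = -δ ∧
    (⅟(2 : K)) • (star (Δm φ) - Δm φ) = δ ∧
    (star (Δp (φ + ⟨P δ, hPV ⟨δ, hδ⟩⟩)) = Δp (φ + ⟨P δ, hPV ⟨δ, hδ⟩⟩) ∧
     star (Δm (φ + ⟨P δ, hPV ⟨δ, hδ⟩⟩)) = Δm (φ + ⟨P δ, hPV ⟨δ, hδ⟩⟩)) ∧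
    Δp (φ + ⟨P δ, hPV ⟨δ, hδ⟩⟩) - Δm (φ + ⟨P δ, hPV ⟨δ, hδ⟩⟩) = Δp φ - Δm φ := by
  set a := Δp φ with ha
  set b := Δm φ with hb
  -- basic facts
  have h2δa : (2 : K) • δ = star a - a := by
    rw [hδdef, smul_smul, mul_invOf_self, one_smul]
  have hab : star a - a = star b - b := by
    have := hψreal
    rw [star_sub] at this
    linear_combination (norm := abel) this
  have h2δb : (2 : K) • δ = star b - b := h2δa.trans hab
  have hstar2 : star (2 : K) = 2 := by
    rw [show (2:K) = 1 + 1 by norm_num, star_add, star_one]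
  have hsδ : star δ = -δ := by
    have h : (2 : K) • star δ = (2 : K) • (-δ) := by
      have h' := congrArg star h2δa
      rw [star_smul, hstar2, star_sub, star_star] at h'
      rw [h', smul_neg, h2δa]; abel
    calc star δ = ⅟(2:K) • ((2:K) • star δ) := (invOf_smul_smul _ _).symm
      _ = ⅟(2:K) • ((2:K) • (-δ)) := by rw [h]
      _ = -δ := invOf_smul_smul _ _
  have hΔpδ : Δp ⟨P δ, hPV ⟨δ, hδ⟩⟩ = δ := hpΔ ⟨δ, hδ⟩
  have hΔmδ : Δm ⟨P δ, hPV ⟨δ, hδ⟩⟩ = δ := hmΔ ⟨δ, hδ⟩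
  have hpadd : Δp (φ + ⟨P δ, hPV ⟨δ, hδ⟩⟩) = a + δ := by
    rw [map_add, hΔpδ, ha]
  have hmadd : Δm (φ + ⟨P δ, hPV ⟨δ, hδ⟩⟩) = b + δ := by
    rw [map_add, hΔmδ, hb]
  refine ⟨hsδ, ?_, ⟨?_, ?_⟩, ?_⟩
  · rw [← hab, ← h2δa, smul_smul, invOf_mul_self, one_smul]
  · rw [hpadd, star_add, hsδ]
    have : star a = a + (2 : K) • δ := by rw [h2δa]; abel
    rw [this, two_smul]; abel
  · rw [hmadd, star_add, hsδ]
    have : star b = b + (2 : K) • δ := by rw [h2δb]; abel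
    rw [this, two_smul]; abel
  · rw [hpadd, hmadd]; abel
end
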